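/- For every m ∈ ℕ there exists a countably infinite tournament W with i(W) = m such that every tournament T on an at most countable vertex set with i(T) ≤ m embeds into W (W is universal for the class of at most countable tournaments of inversion index at most m). -/

import Mathlib

/-- A tournament on a vertex set `V`: a loopless directed graph such that for all
distinct `x, y` exactly one of `(x,y)`, `(y,x)` is an arc. -/
structure Tournament (V : Type*) where
  rel : V → V → Prop
  irrefl : ∀ x, ¬ rel x x
  total : ∀ x y, x ≠ y → rel x y ∨ rel y x
  asymm : ∀ x y, rel x y → ¬ rel y x

namespace Tournament

variable {V : Type*} {W : Type*}

/-- The tournament obtained from `T` by reversing all arcs both of whose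
endpoints lie in `X`. -/
def inv (T : Tournament V) (X : Set V) : Tournament V where
  rel x y := (x ∈ X ∧ y ∈ X ∧ T.rel y x) ∨ ((x ∉ X ∨ y ∉ X) ∧ T.rel x y)
  irrefl x := by have := T.irrefl x; tauto
  total x y hxy := by
    have := T.total x y hxy
    by_cases hx : x ∈ X <;> by_cases hy : y ∈ X <;> tauto
  asymm x y := by have h1 := T.asymm x y; have h2 := T.asymm y x; tauto

/-- Successive inversions along a finite sequence of subsets (`X_0` first). -/
def invSeq (T : Tournament V) (Xs : List (Set V)) : Tournament V :=
  Xs.foldl Tournament.inv T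

/-- A tournament is acyclic (transitive) when its arc relation is transitive,
i.e. a strict linear order. -/
def IsAcyclic (T : Tournament V) : Prop :=
  ∀ x y z, T.rel x y → T.rel y z → T.rel x z

/-- The inversion index: the least number of subsets to be inverted to reach an
acyclic tournament. -/
noncomputable def index (T : Tournament V) : ℕ :=
  sInf {m | ∃ Xs : List (Set V), Xs.length = m ∧ (T.invSeq Xs).IsAcyclic}

/-- Induced subtournament on a set of vertices. -/
def restrict (T : Tournament V) (A : Set V) : Tournament A where
  rel x y := T.rel x y
  irrefl x := T.irrefl x
  total x y hxy := T.total x y (fun h => hxy (Subtype.ext h))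
  asymm x y := T.asymm x y

/-- `T − x`: the subtournament induced on `V ∖ {x}`. -/
def erase (T : Tournament V) (x : V) : Tournament {y : V // y ≠ x} :=
  T.restrict {y | y ≠ x}

/-- `S` embeds into `T`: `S` is isomorphic to the subtournament of `T` induced on
some subset of the vertices of `T`. -/
def Embeds (S : Tournament V) (T : Tournament W) : Prop :=
  ∃ f : V → W, Function.Injective f ∧ ∀ x y, S.rel x y ↔ T.rel (f x) (f y)

/-- Isomorphism of tournaments. -/
def Iso (S : Tournament V) (T : Tournament W) : Prop :=
  ∃ e : V ≃ W, ∀ x y, S.rel x y ↔ T.rel (e x) (e y)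

/-- The dual tournament, obtained by reversing all arcs. -/
def dual (T : Tournament V) : Tournament V where
  rel x y := T.rel y x
  irrefl x := T.irrefl x
  total x y hxy := (T.total x y hxy).symm
  asymm x y h := T.asymm y x h

/-- `X` is an interval of `T`. -/
def IsInterval (T : Tournament V) (X : Set V) : Prop :=
  ∀ y ∉ X, (∀ x ∈ X, T.rel x y) ∨ (∀ x ∈ X, T.rel y x)

/-- A tournament is indecomposable when all its intervals are trivial. -/
def Indecomposable (T : Tournament V) : Prop :=
  ∀ X : Set V, T.IsInterval X → X = ∅ ∨ X = Set.univ ∨ ∃ x, X = {x}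

end Tournament

/-- The transitive tournament `n̲` on `{0, …, n−1}`, with arcs `(i,j)` for `i < j`. -/
def linear (n : ℕ) : Tournament (Fin n) where
  rel x y := x < y
  irrefl x := lt_irrefl x
  total _ _ h := lt_or_gt_of_ne h
  asymm _ _ h := lt_asymm h

/-- `2ℕ_{<k} = {0, 2, …, 2(k−1)}` as a subset of `Fin N`. -/
def evensLT {N : ℕ} (k : ℕ) : Set (Fin N) := {i | (i : ℕ) % 2 = 0 ∧ (i : ℕ) < 2 * k}

/-- `2ℕ_{<k}+1 = {1, 3, …, 2k−1}` as a subset of `Fin N`. -/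
def oddsLT {N : ℕ} (k : ℕ) : Set (Fin N) := {i | (i : ℕ) % 2 = 1 ∧ (i : ℕ) < 2 * k}

namespace Tournament

/-- The inversion index with values in `ℕ∞`: it is `⊤` (infinite) when no finite
sequence of inversions makes the tournament acyclic. -/
noncomputable def indexE {V : Type*} (T : Tournament V) : ℕ∞ :=
  sInf {n : ℕ∞ | ∃ Xs : List (Set V), (Xs.length : ℕ∞) = n ∧ (T.invSeq Xs).IsAcyclic}

end Tournament

/-!
A tournament of index at most `m` is an acyclic tournament, i.e. a countable linear order,
followed by `m` inversions. It is therefore determined by the position of each vertex in that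
order, which may be taken to be a rational number, together with the `m` bits recording which
inverted sets contain the vertex. The universal tournament has a vertex for every pair of a
rational and a bit pattern: it is the lexicographic order inverted along the `m` bit classes.

Its index is at least `m` because it contains a finite tournament of index exactly `m`. A
tournament of index at most `j` on `N` vertices is coded by a linear order and `j` subsets, so
there are at most `N! · 2^(jN)` of them, fewer than the `2^(k²)` tournaments obtained from two
linear orders of size `k` with arbitrary arcs between them once `k` is large. Such a tournament
has finite index, and since one inversion changes the index by at most one, every smaller
value is attained as well.
-/

theorem List.exists_ofFn_eq {α : Type*} {n : ℕ} (l : List α) (h : l.length = n) :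
    ∃ f : Fin n → α, List.ofFn f = l := by
  subst h
  exact ⟨l.get, List.ofFn_get l⟩

namespace Tournament

variable {V W : Type*}

@[ext]
theorem ext {S T : Tournament V} (h : ∀ x y, S.rel x y ↔ T.rel x y) : S = T := by
  cases S; cases T
  congr
  funext x y
  exact propext (h x y)

theorem eq_of_rel_imp {S T : Tournament V} (h : ∀ x y, S.rel x y → T.rel x y) : S = T := by
  ext x y
  refine ⟨h x y, fun hT => ?_⟩
  have hxy : x ≠ y := fun hxy => T.irrefl x (hxy ▸ hT)
  exact (S.total x y hxy).resolve_right fun hS => T.asymm x y hT (h y x hS)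

def ofLinearOrder (α : Type*) [LinearOrder α] : Tournament α where
  rel x y := x < y
  irrefl x := lt_irrefl x
  total _ _ h := lt_or_gt_of_ne h
  asymm _ _ h := lt_asymm h

@[simp]
theorem ofLinearOrder_rel (α : Type*) [LinearOrder α] (x y : α) :
    (ofLinearOrder α).rel x y ↔ x < y :=
  Iff.rfl

theorem isAcyclic_ofLinearOrder (α : Type*) [LinearOrder α] : (ofLinearOrder α).IsAcyclic :=
  fun _ _ _ => lt_trans

def comap (T : Tournament W) (f : V ↪ W) : Tournament V where
  rel x y := T.rel (f x) (f y)
  irrefl x := T.irrefl (f x)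
  total x y h := T.total (f x) (f y) (f.injective.ne h)
  asymm x y := T.asymm (f x) (f y)

@[simp]
theorem comap_rel (T : Tournament W) (f : V ↪ W) (x y : V) :
    (T.comap f).rel x y ↔ T.rel (f x) (f y) :=
  Iff.rfl

theorem IsAcyclic.comap {T : Tournament W} (hT : T.IsAcyclic) (f : V ↪ W) :
    (T.comap f).IsAcyclic :=
  fun x y z => hT (f x) (f y) (f z)

theorem embeds_comap (T : Tournament W) (f : V ↪ W) : (T.comap f).Embeds T :=
  ⟨f, f.injective, fun _ _ => Iff.rfl⟩

theorem Embeds.exists_eq_comap {S : Tournament V} {T : Tournament W} (h : S.Embeds T) :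
    ∃ f : V ↪ W, S = T.comap f := by
  obtain ⟨f, hf, hrel⟩ := h
  exact ⟨⟨f, hf⟩, ext hrel⟩

@[simp]
theorem inv_rel (T : Tournament V) (X : Set V) (x y : V) :
    (T.inv X).rel x y ↔
      (x ∈ X ∧ y ∈ X ∧ T.rel y x) ∨ ((x ∉ X ∨ y ∉ X) ∧ T.rel x y) :=
  Iff.rfl

theorem inv_inv (T : Tournament V) (X : Set V) : (T.inv X).inv X = T := by
  ext x y
  simp only [inv_rel]
  tauto

theorem inv_empty (T : Tournament V) : T.inv ∅ = T := by
  ext x y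
  simp

theorem comap_inv (T : Tournament W) (f : V ↪ W) (X : Set W) :
    (T.inv X).comap f = (T.comap f).inv (f ⁻¹' X) :=
  rfl

@[simp]
theorem invSeq_nil (T : Tournament V) : T.invSeq [] = T :=
  rfl

@[simp]
theorem invSeq_cons (T : Tournament V) (X : Set V) (Xs : List (Set V)) :
    T.invSeq (X :: Xs) = (T.inv X).invSeq Xs :=
  rfl

theorem invSeq_append (T : Tournament V) (Xs Ys : List (Set V)) :
    T.invSeq (Xs ++ Ys) = (T.invSeq Xs).invSeq Ys :=
  List.foldl_append

theorem invSeq_replicate_empty (T : Tournament V) (n : ℕ) :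
    T.invSeq (List.replicate n ∅) = T := by
  induction n with
  | zero => rfl
  | succ n ih => rw [List.replicate_succ, invSeq_cons, inv_empty, ih]

theorem invSeq_invSeq_reverse (T : Tournament V) (Xs : List (Set V)) :
    (T.invSeq Xs).invSeq Xs.reverse = T := by
  induction Xs generalizing T with
  | nil => rfl
  | cons X Xs ih =>
    rw [invSeq_cons, List.reverse_cons, invSeq_append, ih]
    exact inv_inv T X

theorem comap_invSeq (T : Tournament W) (f : V ↪ W) (Xs : List (Set W)) :
    (T.invSeq Xs).comap f = (T.comap f).invSeq (Xs.map (f ⁻¹' ·)) := by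
  induction Xs generalizing T with
  | nil => rfl
  | cons X Xs ih => rw [invSeq_cons, ih, comap_inv]; rfl

theorem indexE_le_length {T : Tournament V} {Xs : List (Set V)} (h : (T.invSeq Xs).IsAcyclic) :
    T.indexE ≤ Xs.length :=
  sInf_le ⟨Xs, rfl, h⟩

theorem IsAcyclic.indexE_eq_zero {T : Tournament V} (h : T.IsAcyclic) : T.indexE = 0 :=
  nonpos_iff_eq_zero.1 (indexE_le_length (Xs := []) h)

theorem indexE_le_iff {T : Tournament V} {k : ℕ} :
    T.indexE ≤ k ↔ ∃ Xs : List (Set V), Xs.length = k ∧ (T.invSeq Xs).IsAcyclic := by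
  refine ⟨fun h => ?_, fun ⟨Xs, hlen, hXs⟩ => hlen ▸ indexE_le_length hXs⟩
  have hne : {n : ℕ∞ | ∃ Xs : List (Set V), (Xs.length : ℕ∞) = n ∧
      (T.invSeq Xs).IsAcyclic}.Nonempty := by
    by_contra hempty
    rw [Set.not_nonempty_iff_eq_empty] at hempty
    rw [indexE, hempty, sInf_empty] at h
    exact ENat.top_ne_natCast k (top_le_iff.1 h).symm
  obtain ⟨Xs, hlen, hXs⟩ := csInf_mem hne
  have hXk : Xs.length ≤ k := by rw [indexE, ← hlen] at h; exact_mod_cast h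
  refine ⟨Xs ++ List.replicate (k - Xs.length) ∅, by simp [hXk], ?_⟩
  rwa [invSeq_append, invSeq_replicate_empty]

theorem indexE_le_indexE_inv_add_one (T : Tournament V) (X : Set V) :
    T.indexE ≤ (T.inv X).indexE + 1 := by
  induction h : (T.inv X).indexE using ENat.recTopCoe with
  | top => simp
  | coe k =>
    obtain ⟨Xs, hlen, hXs⟩ := indexE_le_iff.1 h.le
    exact (indexE_le_length (Xs := X :: Xs) hXs).trans (by simp [hlen])

theorem Embeds.indexE_le {S : Tournament V} {T : Tournament W} (h : S.Embeds T) :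
    S.indexE ≤ T.indexE := by
  obtain ⟨f, rfl⟩ := h.exists_eq_comap
  refine le_sInf ?_
  rintro _ ⟨Xs, rfl, hXs⟩
  have hacyc : ((T.comap f).invSeq (Xs.map (f ⁻¹' ·))).IsAcyclic := by
    rw [← comap_invSeq]
    exact hXs.comap f
  simpa using indexE_le_length hacyc

/-- Each inversion lowers the index by at most one, so along a sequence of inversions that ends
in an acyclic tournament the index passes through every value below `T.indexE`. -/
theorem exists_indexE_eq_of_le {T : Tournament V} {m : ℕ} (hT : T.indexE ≠ ⊤)
    (hm : (m : ℕ∞) ≤ T.indexE) : ∃ T' : Tournament V, T'.indexE = m := by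
  obtain ⟨k, hk⟩ := ENat.ne_top_iff_exists.1 hT
  obtain ⟨Xs, -, hXs⟩ := indexE_le_iff.1 hk.ge
  clear hT hk
  induction Xs generalizing T with
  | nil =>
    rw [invSeq_nil] at hXs
    exact ⟨T, le_antisymm (by simp [hXs.indexE_eq_zero]) hm⟩
  | cons X Xs ih =>
    by_cases heq : T.indexE = m
    · exact ⟨T, heq⟩
    have hlt : (m : ℕ∞) < (T.inv X).indexE + 1 :=
      (lt_of_le_of_ne hm (Ne.symm heq)).trans_le (indexE_le_indexE_inv_add_one T X)
    exact ih (ENat.natCast_lt_add_one_iff.1 hlt) hXs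

noncomputable abbrev IsAcyclic.linearOrder {A : Tournament V} (hA : A.IsAcyclic) :
    LinearOrder V :=
  haveI : IsStrictTotalOrder V A.rel :=
    { trichotomous := fun x y hxy hyx => by
        by_contra hne
        exact (A.total x y hne).elim hxy hyx
      irrefl := A.irrefl
      trans := hA }
  haveI := Classical.decRel A.rel
  linearOrderOfSTO A.rel

theorem IsAcyclic.exists_eq_comap_rat [Countable V] {A : Tournament V} (hA : A.IsAcyclic) :
    ∃ g : V ↪ ℚ, A = (ofLinearOrder ℚ).comap g := by
  let := hA.linearOrder
  obtain ⟨g⟩ := Order.embedding_from_countable_to_dense V ℚ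
  exact ⟨g.toEmbedding, ext fun _ _ => g.lt_iff_lt.symm⟩

theorem IsAcyclic.exists_eq_comap_fin [Fintype V] {A : Tournament V} (hA : A.IsAcyclic) :
    ∃ σ : V ≃ Fin (Fintype.card V), A = (ofLinearOrder (Fin _)).comap σ.toEmbedding := by
  let := hA.linearOrder
  let σ := (Fintype.orderIsoFinOfCardEq V rfl).symm
  exact ⟨σ.toEquiv, ext fun _ _ => σ.lt_iff_lt.symm⟩

section BackwardArcs

variable [Fintype V] [LinearOrder V]

open scoped Classical in
noncomputable def backwardArcs (T : Tournament V) : Finset (V × V) :=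
  {p | p.1 < p.2 ∧ T.rel p.2 p.1}

theorem mem_backwardArcs {T : Tournament V} {p : V × V} :
    p ∈ backwardArcs T ↔ p.1 < p.2 ∧ T.rel p.2 p.1 := by
  simp [backwardArcs]

theorem eq_ofLinearOrder_of_backwardArcs_eq_empty {T : Tournament V}
    (h : backwardArcs T = ∅) : T = ofLinearOrder V := by
  refine (eq_of_rel_imp fun x y (hxy : x < y) => ?_).symm
  refine (T.total x y hxy.ne).resolve_right fun hyx => ?_
  simpa [h] using (mem_backwardArcs (p := (x, y))).2 ⟨hxy, hyx⟩

theorem backwardArcs_inv_pair_ssubset {T : Tournament V} {x y : V}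
    (hxy : (x, y) ∈ backwardArcs T) : backwardArcs (T.inv {x, y}) ⊂ backwardArcs T := by
  refine lt_of_le_of_lt (fun p hp => ?_) (Finset.erase_ssubset hxy)
  obtain ⟨a, b⟩ := p
  rw [mem_backwardArcs] at hxy hp
  obtain ⟨hab, hba⟩ := hp
  simp only [inv_rel, Set.mem_insert_iff, Set.mem_singleton_iff] at hba
  rw [Finset.mem_erase, mem_backwardArcs]
  rcases hba with ⟨hb, ha, hr⟩ | ⟨hout, hr⟩
  · exfalso
    rcases ha with rfl | rfl <;> rcases hb with rfl | rfl
    · exact lt_irrefl _ hab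
    · exact T.asymm _ _ hr hxy.2
    · exact lt_asymm hab hxy.1
    · exact lt_irrefl _ hab
  · refine ⟨fun hp => ?_, hab, hr⟩
    simp only [Prod.mk.injEq] at hp
    simp [hp] at hout

theorem indexE_le_card_backwardArcs (T : Tournament V) :
    T.indexE ≤ (backwardArcs T).card := by
  induction hn : (backwardArcs T).card using Nat.strong_induction_on generalizing T with
  | _ n ih =>
  obtain h | ⟨⟨x, y⟩, hxy⟩ := (backwardArcs T).eq_empty_or_nonempty
  · rw [eq_ofLinearOrder_of_backwardArcs_eq_empty h, (isAcyclic_ofLinearOrder V).indexE_eq_zero]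
    exact zero_le
  · have hlt := hn ▸ Finset.card_lt_card (backwardArcs_inv_pair_ssubset hxy)
    calc T.indexE ≤ (T.inv {x, y}).indexE + 1 := indexE_le_indexE_inv_add_one T _
      _ ≤ (backwardArcs (T.inv {x, y})).card + 1 := by gcongr; exact ih _ hlt _ rfl
      _ ≤ n := by norm_cast

end BackwardArcs

theorem indexE_ne_top [Finite V] (T : Tournament V) : T.indexE ≠ ⊤ := by
  have := Fintype.ofFinite V
  let : LinearOrder V := LinearOrder.lift' _ (Fintype.equivFin V).injective
  exact ((indexE_le_card_backwardArcs T).trans_lt (ENat.natCast_lt_top _)).ne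

theorem exists_eq_comap_invSeq_ofFn [Fintype V] {T : Tournament V} {j : ℕ}
    (hT : T.indexE ≤ j) : ∃ (σ : V ≃ Fin (Fintype.card V)) (X : Fin j → Set V),
      T = ((ofLinearOrder _).comap σ.toEmbedding).invSeq (List.ofFn X) := by
  obtain ⟨Xs, hlen, hXs⟩ := indexE_le_iff.1 hT
  obtain ⟨σ, hσ⟩ := hXs.exists_eq_comap_fin
  obtain ⟨X, hX⟩ := List.exists_ofFn_eq (n := j) Xs.reverse (by simp [hlen])
  exact ⟨σ, X, by rw [hX, ← hσ, invSeq_invSeq_reverse]⟩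

section CrossArcs

variable {α β : Type*} [LinearOrder α] [LinearOrder β]

def ofCrossArcs (B : Set (α × β)) : Tournament (α ⊕ β) where
  rel
    | .inl a, .inl a' => a < a'
    | .inr b, .inr b' => b < b'
    | .inl a, .inr b => (a, b) ∈ B
    | .inr b, .inl a => (a, b) ∉ B
  irrefl := by rintro (a | b) <;> exact lt_irrefl _
  total := by
    rintro (a | b) (a' | b') h
    · exact lt_or_gt_of_ne fun h' => h (congrArg _ h')
    · exact em _
    · exact (em _).symm
    · exact lt_or_gt_of_ne fun h' => h (congrArg _ h')
  asymm := by
    rintro (a | b) (a' | b') h h'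
    · exact lt_asymm h h'
    · exact h' h
    · exact h h'
    · exact lt_asymm h h'

theorem ofCrossArcs_injective : Function.Injective (ofCrossArcs (α := α) (β := β)) := by
  intro B B' h
  ext ⟨a, b⟩
  exact Iff.of_eq (congrArg (fun T => T.rel (.inl a) (.inr b)) h)

end CrossArcs

theorem exists_lt_indexE (j : ℕ) :
    ∃ k, ∃ T : Tournament (Fin k ⊕ Fin k), (j : ℕ∞) < T.indexE := by
  set k := 2 ^ (j + 5)
  refine ⟨k, ?_⟩
  by_contra! h
  choose σ X hσX using fun B : Set (Fin k × Fin k) =>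
    exists_eq_comap_invSeq_ofFn (h (ofCrossArcs B))
  have hinj : Function.Injective fun B => (σ B, X B) := by
    intro B B' hBB'
    simp only [Prod.mk.injEq] at hBB'
    apply ofCrossArcs_injective
    rw [hσX B, hσX B', hBB'.1, hBB'.2]
  have hcard := Fintype.card_le_of_injective _ hinj
  simp only [Fintype.card_set, Fintype.card_prod, Fintype.card_fun, Fintype.card_sum,
    Fintype.card_fin] at hcard
  -- the `2^(k²)` sets `B` against at most `N^N · (2^N)^j` codes `(σ, X)`, where `N = 2k`
  have hN : k + k = 2 ^ (j + 6) := by rw [pow_succ]; omega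
  have hbound : (2 ^ (j + 6)) ^ 2 ^ (j + 6) * (2 ^ 2 ^ (j + 6)) ^ j < 2 ^ (k * k) := by
    rw [← pow_mul, ← pow_mul, ← pow_add]
    refine Nat.pow_lt_pow_right (by norm_num) ?_
    have hj : j < 2 ^ j := Nat.lt_two_pow_self
    simp only [k, pow_add]
    nlinarith
  have hequiv : Fintype.card (Fin k ⊕ Fin k ≃ Fin (k + k)) ≤ (k + k) ^ (k + k) :=
    (Fintype.card_le_of_injective _ Equiv.coe_fn_injective).trans_eq (by simp)
  rw [hN] at hcard hequiv
  exact absurd (hcard.trans (Nat.mul_le_mul_right _ hequiv)) hbound.not_ge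

section Universal

variable {m : ℕ} (e : ℕ ≃ ℚ × (Fin m → Bool))

def universalBase : Tournament ℕ :=
  (ofLinearOrder (ℚ ×ₗ ℕ)).comap
    ⟨fun n => toLex ((e n).1, n), fun _ _ h => (Prod.ext_iff.1 (toLex.injective h)).2⟩

theorem universalBase_rel_of_lt {a b : ℕ} (h : (e a).1 < (e b).1) : (universalBase e).rel a b :=
  Prod.Lex.toLex_lt_toLex.2 (Or.inl h)

def universal : Tournament ℕ :=
  (universalBase e).invSeq (List.ofFn fun i => {n | (e n).2 i = true})

theorem indexE_universal_le : (universal e).indexE ≤ m := by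
  have hacyc : ((universal e).invSeq
      (List.ofFn fun i => {n | (e n).2 i = true}).reverse).IsAcyclic := by
    rw [universal, invSeq_invSeq_reverse]
    exact (isAcyclic_ofLinearOrder _).comap _
  simpa using indexE_le_length hacyc

theorem embeds_universal {V : Type*} [Countable V] {T : Tournament V} (hT : T.indexE ≤ m) :
    T.Embeds (universal e) := by
  classical
  obtain ⟨Xs, hlen, hXs⟩ := indexE_le_iff.1 hT
  obtain ⟨g, hg⟩ := hXs.exists_eq_comap_rat
  obtain ⟨Y, hY⟩ := List.exists_ofFn_eq (n := m) Xs.reverse (by simp [hlen])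
  let f : V ↪ ℕ := ⟨fun v => e.symm (g v, fun i => decide (v ∈ Y i)),
    fun _ _ h => g.injective (congrArg Prod.fst (e.symm.injective h))⟩
  have hf (v : V) : e (f v) = (g v, fun i => decide (v ∈ Y i)) := e.apply_symm_apply _
  have hbase : T.invSeq Xs = (universalBase e).comap f := by
    rw [hg]
    exact eq_of_rel_imp fun x y hxy => universalBase_rel_of_lt e (by simpa [hf] using hxy)
  have hcolour : (List.ofFn fun i => {n | (e n).2 i = true}).map (f ⁻¹' ·) = Xs.reverse := by
    rw [List.map_ofFn, ← hY]
    congr 1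
    funext i
    ext v
    simp [hf]
  have hT : T = (universal e).comap f := by
    rw [universal, comap_invSeq, hcolour, ← hbase, invSeq_invSeq_reverse]
  exact hT ▸ embeds_comap _ f

end Universal

end Tournament

/-- for every `m` there is a countably infinite tournament `W` of
inversion index `m` into which every tournament on an at most countable vertex set
of inversion index at most `m` embeds. -/
theorem exists_universal_tournament (m : ℕ) :
    ∃ W : Tournament ℕ, W.indexE = (m : ℕ∞) ∧
      ∀ (V : Type*) (T : Tournament V), Countable V →
        T.indexE ≤ (m : ℕ∞) → T.Embeds W := by
  obtain ⟨e⟩ : Nonempty (ℕ ≃ ℚ × (Fin m → Bool)) := inferInstance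
  obtain ⟨k, T, hT⟩ := Tournament.exists_lt_indexE m
  obtain ⟨T₀, hT₀⟩ := Tournament.exists_indexE_eq_of_le T.indexE_ne_top hT.le
  refine ⟨Tournament.universal e, le_antisymm (Tournament.indexE_universal_le e) ?_,
    fun V T _ hT => Tournament.embeds_universal e hT⟩
  calc (m : ℕ∞) = T₀.indexE := hT₀.symm
    _ ≤ (Tournament.universal e).indexE := (Tournament.embeds_universal e hT₀.le).indexE_le
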